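/- arXiv:1004.1128 — 3 statements merged into one kernel-verified Lean document; each statement's English description precedes it below -/
import Mathlib

section
/- The class 𝔖 contains the power series x and x/(1−x^m) for every m ≥ 1, and 𝔖 is closed under multiplication by positive integers, under addition, and under Cauchy product: if P(x), Q(x) ∈ 𝔖 and k is a positive integer then k·P(x), P(x)+Q(x), and P(x)·Q(x) are in 𝔖. -/
open Filter Finset

noncomputable section

/-- `R ∈ RT1`: coefficients eventually positive and `r(n-1)/r(n) → 1`. -/
def RT1 (r : ℕ → ℝ) : Prop :=
  (∀ᶠ n in Filter.atTop, 0 < r n) ∧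
    Filter.Tendsto (fun n => r (n - 1) / r n) Filter.atTop (nhds 1)

/-- The coefficients are all natural numbers. -/
def IsNatSeries (r : ℕ → ℝ) : Prop := ∀ n, ∃ k : ℕ, r n = (k : ℝ)

/-- Members of `RT1` with natural-number coefficients. -/
def RTN1 (r : ℕ → ℝ) : Prop := RT1 r ∧ IsNatSeries r

/-- Coefficient sequence of `R(x^d)`. -/
def substPow (d : ℕ) (r : ℕ → ℝ) : ℕ → ℝ := fun n => if d ∣ n then r (n / d) else 0

/-- Cauchy product of coefficient sequences. -/
def cauchy (a b : ℕ → ℝ) : ℕ → ℝ := fun n => ∑ j ∈ Finset.range (n + 1), a j * b (n - j)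

/-- A polynomial with natural-number coefficients (as a coefficient sequence). -/
def IsNatPoly (p : ℕ → ℝ) : Prop := IsNatSeries p ∧ ∃ N, ∀ n, N ≤ n → p n = 0

/-- Coefficient sequence of `x^c · A(x)`. -/
def xPowMul (c : ℕ) (a : ℕ → ℝ) : ℕ → ℝ := fun n => if c ≤ n then a (n - c) else 0

/-- `𝔔`: nonzero power series of the form `x^c · R(x^d)` with `0 ≤ c < d`, `R ∈ RTN1`. -/
def InQ (q : ℕ → ℝ) : Prop :=
  q ≠ 0 ∧ ∃ (c d : ℕ) (r : ℕ → ℝ), c < d ∧ RTN1 r ∧ q = xPowMul c (substPow d r)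

/-- `𝔖`: nonzero power series with natural-number coefficients and zero constant term
expressible as `p₀(x) + ∑_{i=1}^k p_i(x) · R_i(x^{d_i})` with the `p_i ∈ ℕ[x]`,
`R_i ∈ RTN1` and `d_i ≥ 1`. -/
def InS (a : ℕ → ℝ) : Prop :=
  a ≠ 0 ∧ a 0 = 0 ∧ IsNatSeries a ∧
    ∃ (k : ℕ) (p : ℕ → (ℕ → ℝ)) (R : ℕ → (ℕ → ℝ)) (d : ℕ → ℕ),
      IsNatPoly (p 0) ∧
      (∀ i ∈ Finset.Icc 1 k, IsNatPoly (p i) ∧ RTN1 (R i) ∧ 1 ≤ d i) ∧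
      ∀ n, a n = p 0 n + ∑ i ∈ Finset.Icc 1 k, cauchy (p i) (substPow (d i) (R i)) n

/-! Closure under `k ·` and `+` is immediate once `𝔖`-representations are read as the additive
submonoid of `ℝ⟦X⟧` generated by `ℕ[x]` and the products `p(x) R(x^d)`; since that set of
generators is closed under multiplication by `ℕ[x]`, closure under products reduces to
`R(x^d) S(x^e)`. Splitting `R` by residues mod `e` and `S` by residues mod `d` writes this as a
sum of terms `x^c (R_α S_β)(x^{de})` with `R_α(x) = ∑ r(en+α) xⁿ`, so it remains to see that
arithmetic subsequences and Cauchy products of nonnegative `RT1` sequences are again `RT1`.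
For the product, the ratio bounds `r(m) ≤ (1+η) r(m+1)` pass to the convolution termwise except
for one term that is counted twice, and that term is negligible because the `J` terms following
it in the convolution are all comparable to it. -/

open Topology PowerSeries

section NatCoefficients

variable {a b : ℕ → ℝ}

lemma isNatSeries_indicator (p : ℕ → Prop) [DecidablePred p] :
    IsNatSeries fun n => if p n then 1 else 0 := fun n => by
  dsimp only
  split_ifs
  exacts [⟨1, Nat.cast_one.symm⟩, ⟨0, Nat.cast_zero.symm⟩]

lemma IsNatSeries.nonneg (ha : IsNatSeries a) (n : ℕ) : 0 ≤ a n := by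
  obtain ⟨k, hk⟩ := ha n
  exact hk ▸ k.cast_nonneg

lemma IsNatSeries.add (ha : IsNatSeries a) (hb : IsNatSeries b) : IsNatSeries (a + b) := fun n => by
  obtain ⟨j, hj⟩ := ha n
  obtain ⟨k, hk⟩ := hb n
  exact ⟨j + k, by simp [hj, hk]⟩

lemma IsNatSeries.natCast_mul (ha : IsNatSeries a) (k : ℕ) : IsNatSeries fun n => k * a n :=
  fun n => by
  obtain ⟨j, hj⟩ := ha n
  exact ⟨k * j, by simp [hj]⟩

lemma IsNatSeries.cauchy (ha : IsNatSeries a) (hb : IsNatSeries b) : IsNatSeries (cauchy a b) := by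
  choose f hf using ha
  choose g hg using hb
  exact fun n => ⟨∑ j ∈ range (n + 1), f j * g (n - j), by simp [_root_.cauchy, hf, hg]⟩

lemma isNatPoly_zero : IsNatPoly 0 := ⟨fun _ => ⟨0, by simp⟩, 0, fun _ _ => rfl⟩

lemma IsNatPoly.add (ha : IsNatPoly a) (hb : IsNatPoly b) : IsNatPoly (a + b) := by
  obtain ⟨haN, M, hM⟩ := ha
  obtain ⟨hbN, N, hN⟩ := hb
  exact ⟨haN.add hbN, M + N, fun n hn => by simp [hM n (by omega), hN n (by omega)]⟩

lemma IsNatPoly.cauchy (ha : IsNatPoly a) (hb : IsNatPoly b) : IsNatPoly (cauchy a b) := by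
  obtain ⟨haN, M, hM⟩ := ha
  obtain ⟨hbN, N, hN⟩ := hb
  refine ⟨haN.cauchy hbN, M + N, fun n hn => Finset.sum_eq_zero fun j hj => ?_⟩
  rcases le_or_gt M j with h | h
  · rw [hM j h, zero_mul]
  · rw [hN (n - j) (by omega), mul_zero]

lemma IsNatPoly.xPowMul (ha : IsNatPoly a) (c : ℕ) : IsNatPoly (xPowMul c a) := by
  obtain ⟨haN, M, hM⟩ := ha
  refine ⟨fun n => ?_, M + c, fun n hn => ?_⟩
  · unfold _root_.xPowMul
    split_ifs
    exacts [haN _, ⟨0, Nat.cast_zero.symm⟩]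
  · simp [_root_.xPowMul, hM (n - c) (by omega)]

end NatCoefficients

section RatioWithin

variable {r s : ℕ → ℝ} {η : ℝ} {K : ℕ}

def RatioWithin (η : ℝ) (K : ℕ) (r : ℕ → ℝ) : Prop :=
  ∀ m, K ≤ m → 0 < r m ∧ r (m + 1) ≤ (1 + η) * r m ∧ r m ≤ (1 + η) * r (m + 1)

lemma RatioWithin.mono {K' : ℕ} (h : RatioWithin η K r) (hK : K ≤ K') : RatioWithin η K' r :=
  fun m hm => h m (hK.trans hm)

lemma RT1.exists_ratioWithin (h : RT1 r) (hη : 0 < η) : ∃ K, RatioWithin η K r := by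
  have hlow : ∀ᶠ n in atTop, 1 / (1 + η) < r (n - 1) / r n :=
    h.2.eventually_const_lt (by rw [div_lt_one (by linarith)]; linarith)
  have hup : ∀ᶠ n in atTop, r (n - 1) / r n < 1 + η := h.2.eventually_lt_const (by linarith)
  obtain ⟨K, hK⟩ := eventually_atTop.1 (h.1.and (hlow.and hup))
  refine ⟨K, fun m hm => ⟨(hK m hm).1, ?_, ?_⟩⟩
  · obtain ⟨hpos, hl, -⟩ := hK (m + 1) (by omega)
    rw [Nat.add_sub_cancel, div_lt_div_iff₀ (by linarith) hpos] at hl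
    linarith
  · obtain ⟨hpos, -, hu⟩ := hK (m + 1) (by omega)
    rw [Nat.add_sub_cancel, div_lt_iff₀ hpos] at hu
    exact hu.le

lemma exists_pos_of_eventually_nhds {p : ℝ → Prop} (h : ∀ᶠ η in 𝓝 0, p η) :
    ∃ η > 0, p η :=
  ((h.filter_mono nhdsWithin_le_nhds).and
    (self_mem_nhdsWithin : Set.Ioi (0 : ℝ) ∈ 𝓝[>] 0)).exists.imp
    fun _ hη => ⟨hη.2, hη.1⟩

lemma RT1.of_ratioWithin (h : ∀ η > 0, ∃ K, RatioWithin η K r) : RT1 r := by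
  refine ⟨?_, tendsto_order.2 ⟨fun a ha => ?_, fun b hb => ?_⟩⟩
  · obtain ⟨K, hK⟩ := h 1 one_pos
    exact eventually_atTop.2 ⟨K, fun m hm => (hK m hm).1⟩
  · have hcont : Tendsto (fun η : ℝ => a * (1 + η)) (𝓝 0) (𝓝 a) :=
      ((continuous_const.add continuous_id).const_mul a).tendsto' 0 a (by simp)
    obtain ⟨η, hη, haη⟩ := exists_pos_of_eventually_nhds (hcont.eventually_lt_const ha)
    obtain ⟨K, hK⟩ := h η hη
    refine eventually_atTop.2 ⟨K + 1, fun n hn => ?_⟩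
    obtain ⟨m, rfl⟩ : ∃ m, n = m + 1 := ⟨n - 1, by omega⟩
    obtain ⟨hpos, hle, -⟩ := hK m (by omega)
    have hpos' := (hK (m + 1) (by omega)).1
    rw [Nat.add_sub_cancel, lt_div_iff₀ hpos']
    rcases le_or_gt a 0 with ha0 | ha0
    · nlinarith
    · nlinarith [mul_le_mul_of_nonneg_left hle ha0.le]
  · obtain ⟨K, hK⟩ := h ((b - 1) / 2) (by linarith)
    refine eventually_atTop.2 ⟨K + 1, fun n hn => ?_⟩
    obtain ⟨m, rfl⟩ : ∃ m, n = m + 1 := ⟨n - 1, by omega⟩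
    obtain ⟨-, -, hle⟩ := hK m (by omega)
    have hpos := (hK (m + 1) (by omega)).1
    rw [Nat.add_sub_cancel, div_lt_iff₀ hpos]
    nlinarith

lemma RatioWithin.le_pow_mul_add (h : RatioWithin η K r) (hη : 0 ≤ η) {m : ℕ}
    (hm : K ≤ m) :
    ∀ t, r m ≤ (1 + η) ^ t * r (m + t)
  | 0 => by simp
  | t + 1 => by
    have := (h (m + t) (by omega)).2.2
    calc r m ≤ (1 + η) ^ t * r (m + t) := h.le_pow_mul_add hη hm t
      _ ≤ (1 + η) ^ t * ((1 + η) * r (m + t + 1)) := by gcongr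
      _ = (1 + η) ^ (t + 1) * r (m + (t + 1)) := by ring_nf

lemma RatioWithin.add_le_pow_mul (h : RatioWithin η K r) (hη : 0 ≤ η) {m : ℕ}
    (hm : K ≤ m) :
    ∀ t, r (m + t) ≤ (1 + η) ^ t * r m
  | 0 => by simp
  | t + 1 => by
    have := (h (m + t) (by omega)).2.1
    calc r (m + (t + 1)) = r (m + t + 1) := rfl
      _ ≤ (1 + η) * r (m + t) := this
      _ ≤ (1 + η) * ((1 + η) ^ t * r m) := by gcongr; exact h.add_le_pow_mul hη hm t
      _ = (1 + η) ^ (t + 1) * r m := by ring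

lemma mul_le_cauchy (hr0 : ∀ n, 0 ≤ r n) (hs0 : ∀ n, 0 ≤ s n) {j n : ℕ} (hj : j ≤ n) :
    r j * s (n - j) ≤ cauchy r s n :=
  Finset.single_le_sum (f := fun j => r j * s (n - j))
    (fun j _ => mul_nonneg (hr0 j) (hs0 _)) (Finset.mem_range.2 (by omega))

lemma cauchy_eq_sum_add_sum {h n : ℕ} (hh : h ≤ n) (r s : ℕ → ℝ) :
    cauchy r s n = ∑ j ∈ range (h + 1), r j * s (n - j)
      + ∑ k ∈ range (n - h), r (h + 1 + k) * s (n - (h + 1 + k)) := by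
  rw [cauchy, ← Finset.sum_range_add_sum_Ico _ (by omega : h + 1 ≤ n + 1),
    Finset.sum_Ico_eq_sum_range, show n + 1 - (h + 1) = n - h by omega]

lemma cauchy_le_mul_cauchy_succ (hr0 : ∀ n, 0 ≤ r n) (hs0 : ∀ n, 0 ≤ s n) (hη : 0 ≤ η)
    (hr : RatioWithin η K r) (hs : RatioWithin η K s) {n : ℕ} (hn : 2 * K ≤ n) :
    cauchy r s n ≤ (1 + η) * cauchy r s (n + 1) := by
  have hA : ∀ j ∈ range (K + 1), r j * s (n - j) ≤ (1 + η) * (r j * s (n + 1 - j)) := by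
    intro j hj
    have hj := Finset.mem_range.1 hj
    have := mul_le_mul_of_nonneg_left (hs (n - j) (by omega)).2.2 (hr0 j)
    rw [show n - j + 1 = n + 1 - j by omega] at this
    linarith
  have hB : ∀ k ∈ range (n - K), r (K + 1 + k) * s (n - (K + 1 + k))
      ≤ (1 + η) * (r (K + 1 + (k + 1)) * s (n + 1 - (K + 1 + (k + 1)))) := by
    intro k hk
    have := mul_le_mul_of_nonneg_right (hr (K + 1 + k) (by omega)).2.2 (hs0 (n - (K + 1 + k)))
    rw [show K + 1 + (k + 1) = K + 1 + k + 1 by omega,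
      show n + 1 - (K + 1 + k + 1) = n - (K + 1 + k) by omega]
    linarith
  have hrest : 0 ≤ r (K + 1 + 0) * s (n + 1 - (K + 1 + 0)) := mul_nonneg (hr0 _) (hs0 _)
  rw [cauchy_eq_sum_add_sum (by omega : K ≤ n), cauchy_eq_sum_add_sum (by omega : K ≤ n + 1),
    show n + 1 - K = n - K + 1 by omega, Finset.sum_range_succ' _ (n - K)]
  calc _ ≤ ∑ j ∈ range (K + 1), (1 + η) * (r j * s (n + 1 - j)) + ∑ k ∈ range (n - K),
          (1 + η) * (r (K + 1 + (k + 1)) * s (n + 1 - (K + 1 + (k + 1)))) :=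
        add_le_add (Finset.sum_le_sum hA) (Finset.sum_le_sum hB)
    _ ≤ _ := by rw [← Finset.mul_sum, ← Finset.mul_sum]; nlinarith

lemma cauchy_succ_le (hr0 : ∀ n, 0 ≤ r n) (hs0 : ∀ n, 0 ≤ s n)
    (hr : RatioWithin η K r) (hs : RatioWithin η K s) {n : ℕ} (hn : 2 * K ≤ n) :
    cauchy r s (n + 1) ≤ (1 + η) * (cauchy r s n + r K * s (n - K)) := by
  have hA : ∀ j ∈ range (K + 1), r j * s (n + 1 - j) ≤ (1 + η) * (r j * s (n - j)) := by
    intro j hj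
    have hj := Finset.mem_range.1 hj
    have := mul_le_mul_of_nonneg_left (hs (n - j) (by omega)).2.1 (hr0 j)
    rw [show n - j + 1 = n + 1 - j by omega] at this
    linarith
  have hB : ∀ k ∈ range (n - K + 1), r (K + 1 + k) * s (n + 1 - (K + 1 + k))
      ≤ (1 + η) * (r (K + k) * s (n - (K + k))) := by
    intro k hk
    have := mul_le_mul_of_nonneg_right (hr (K + k) (by omega)).2.1 (hs0 (n - (K + k)))
    rw [show K + 1 + k = K + k + 1 by omega, show n + 1 - (K + k + 1) = n - (K + k) by omega]
    linarith
  have hshift : ∑ k ∈ range (n - K + 1), r (K + k) * s (n - (K + k))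
      = ∑ k ∈ range (n - K), r (K + 1 + k) * s (n - (K + 1 + k)) + r K * s (n - K) := by
    rw [Finset.sum_range_succ', add_zero]
    congr 1
    exact Finset.sum_congr rfl fun k _ => by rw [show K + (k + 1) = K + 1 + k by omega]
  rw [cauchy_eq_sum_add_sum (by omega : K ≤ n), cauchy_eq_sum_add_sum (by omega : K ≤ n + 1),
    show n + 1 - K = n - K + 1 by omega]
  calc _ ≤ ∑ j ∈ range (K + 1), (1 + η) * (r j * s (n - j))
        + ∑ k ∈ range (n - K + 1), (1 + η) * (r (K + k) * s (n - (K + k))) :=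
        add_le_add (Finset.sum_le_sum hA) (Finset.sum_le_sum hB)
    _ = _ := by rw [← Finset.mul_sum, ← Finset.mul_sum, hshift]; ring

lemma mul_le_pow_mul_cauchy (hr0 : ∀ n, 0 ≤ r n) (hs0 : ∀ n, 0 ≤ s n) (hη : 0 ≤ η)
    (hr : RatioWithin η K r) (hs : RatioWithin η K s) {J n : ℕ} (hn : 2 * K + J ≤ n) :
    (J + 1) * (r K * s (n - K)) ≤ (1 + η) ^ (2 * J) * cauchy r s n := by
  have hterm : ∀ t ∈ range (J + 1),
      r K * s (n - K) ≤ (1 + η) ^ (2 * J) * (r (K + t) * s (n - (K + t))) := by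
    intro t ht
    have ht := Finset.mem_range.1 ht
    have hpow : (1 + η) ^ t ≤ (1 + η) ^ J := pow_le_pow_right₀ (by linarith) (by omega)
    have h1 : r K ≤ (1 + η) ^ J * r (K + t) :=
      (hr.le_pow_mul_add hη le_rfl t).trans (by gcongr; exact hr0 _)
    have h2 : s (n - K) ≤ (1 + η) ^ J * s (n - (K + t)) := by
      have := hs.add_le_pow_mul hη (m := n - (K + t)) (by omega) t
      rw [show n - (K + t) + t = n - K by omega] at this
      exact this.trans (by gcongr; exact hs0 _)
    calc r K * s (n - K) ≤ ((1 + η) ^ J * r (K + t)) * ((1 + η) ^ J * s (n - (K + t))) :=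
          mul_le_mul h1 h2 (hs0 _) (mul_nonneg (pow_nonneg (by linarith) _) (hr0 _))
      _ = _ := by ring
  have hwindow : ∑ t ∈ range (J + 1), r (K + t) * s (n - (K + t)) ≤ cauchy r s n := by
    have hIco := Finset.sum_Ico_eq_sum_range (fun j => r j * s (n - j)) K (K + J + 1)
    rw [show K + J + 1 - K = J + 1 by omega] at hIco
    rw [← hIco]
    exact Finset.sum_le_sum_of_subset_of_nonneg
      (fun j hj => by simp only [Finset.mem_Ico, Finset.mem_range] at hj ⊢; omega)
      (fun j _ _ => mul_nonneg (hr0 j) (hs0 _))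
  calc (J + 1 : ℝ) * (r K * s (n - K))
      = ∑ t ∈ range (J + 1), r K * s (n - K) := by simp
    _ ≤ ∑ t ∈ range (J + 1), (1 + η) ^ (2 * J) * (r (K + t) * s (n - (K + t))) :=
        Finset.sum_le_sum hterm
    _ ≤ _ := by rw [← Finset.mul_sum]; gcongr

end RatioWithin

lemma tendsto_one_add_pow_mul (k : ℕ) (a : ℝ) :
    Tendsto (fun η : ℝ => (1 + η) ^ k * a) (𝓝 0) (𝓝 a) :=
  (((continuous_const.add continuous_id).pow k).mul continuous_const).tendsto' 0 a (by simp)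

theorem RT1.cauchy_of_nonneg {r s : ℕ → ℝ} (hr : RT1 r) (hs : RT1 s) (hr0 : ∀ n, 0 ≤ r n)
    (hs0 : ∀ n, 0 ≤ s n) : RT1 (cauchy r s) := by
  refine RT1.of_ratioWithin fun ε hε => ?_
  obtain ⟨J, hJ⟩ := exists_nat_one_div_lt (by positivity : 0 < ε / 4)
  obtain ⟨η, hη, hηJ, hηε, hηε'⟩ : ∃ η > 0,
      (1 + η) ^ (2 * J) < 2 ∧ η < ε ∧ (1 + η) * (1 + ε / 2) < 1 + ε := by
    simpa only [mul_one, pow_one] using exists_pos_of_eventually_nhds <|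
      ((tendsto_one_add_pow_mul (2 * J) 1).eventually_lt_const one_lt_two).and <|
      (eventually_lt_nhds hε).and <|
      (tendsto_one_add_pow_mul 1 (1 + ε / 2)).eventually_lt_const (by linarith)
  obtain ⟨Kr, hKr⟩ := hr.exists_ratioWithin hη
  obtain ⟨Ks, hKs⟩ := hs.exists_ratioWithin hη
  set K := max Kr Ks
  replace hKr := hKr.mono (le_max_left Kr Ks)
  replace hKs := hKs.mono (le_max_right Kr Ks)
  refine ⟨2 * K + J, fun n hn => ?_⟩
  have hpos : 0 < cauchy r s n := (mul_pos (hKr K le_rfl).1 (hKs (n - K) (by omega)).1).trans_le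
    (mul_le_cauchy hr0 hs0 (by omega))
  have hup := cauchy_le_mul_cauchy_succ hr0 hs0 hη.le hKr hKs (n := n) (by omega)
  have hdown := cauchy_succ_le hr0 hs0 hKr hKs (n := n) (by omega)
  have hwin := mul_le_pow_mul_cauchy hr0 hs0 hη.le hKr hKs (J := J) (n := n) (by omega)
  have hsmall : r K * s (n - K) ≤ ε / 2 * cauchy r s n := by
    have hJ' : 2 < ε / 2 * (J + 1) := by
      rw [div_lt_iff₀ (by positivity)] at hJ; linarith
    nlinarith [mul_nonneg (hr0 K) (hs0 (n - K))]
  refine ⟨hpos, ?_, ?_⟩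
  · calc cauchy r s (n + 1) ≤ (1 + η) * (cauchy r s n + r K * s (n - K)) := hdown
      _ ≤ (1 + η) * ((1 + ε / 2) * cauchy r s n) := by gcongr; linarith
      _ ≤ (1 + ε) * cauchy r s n := by rw [← mul_assoc]; gcongr
  · have : 0 ≤ cauchy r s (n + 1) :=
      (mul_le_cauchy hr0 hs0 le_rfl).trans' (mul_nonneg (hr0 _) (hs0 _))
    nlinarith

theorem RT1.comp_mul_add {r : ℕ → ℝ} (h : RT1 r) {e : ℕ} (he : e ≠ 0) (α : ℕ) :
    RT1 (fun n => r (e * n + α)) := by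
  refine RT1.of_ratioWithin fun ε hε => ?_
  obtain ⟨η, hη, hηε⟩ := exists_pos_of_eventually_nhds
    ((tendsto_one_add_pow_mul e 1).eventually_lt_const (by linarith : 1 < 1 + ε))
  rw [mul_one] at hηε
  obtain ⟨K, hK⟩ := h.exists_ratioWithin hη
  have hKm : ∀ m, K ≤ m → K ≤ e * m + α := fun m hm =>
    hm.trans ((Nat.le_mul_of_pos_left m (Nat.pos_of_ne_zero he)).trans (Nat.le_add_right _ _))
  refine ⟨K, fun m hm => ⟨(hK _ (hKm m hm)).1, ?_, ?_⟩⟩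
  · have hpos := (hK _ (hKm m hm)).1
    calc r (e * (m + 1) + α) = r (e * m + α + e) := by ring_nf
      _ ≤ (1 + η) ^ e * r (e * m + α) := hK.add_le_pow_mul hη.le (hKm m hm) e
      _ ≤ (1 + ε) * r (e * m + α) := by gcongr
  · have hpos := (hK _ (hKm (m + 1) (by omega))).1
    calc r (e * m + α) ≤ (1 + η) ^ e * r (e * m + α + e) :=
          hK.le_pow_mul_add hη.le (hKm m hm) e
      _ = (1 + η) ^ e * r (e * (m + 1) + α) := by ring_nf
      _ ≤ (1 + ε) * r (e * (m + 1) + α) := by gcongr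

lemma RTN1.cauchy {r s : ℕ → ℝ} (hr : RTN1 r) (hs : RTN1 s) : RTN1 (cauchy r s) :=
  ⟨hr.1.cauchy_of_nonneg hs.1 hr.2.nonneg hs.2.nonneg, hr.2.cauchy hs.2⟩

lemma RTN1.comp_mul_add {r : ℕ → ℝ} (hr : RTN1 r) {e : ℕ} (he : e ≠ 0) (α : ℕ) :
    RTN1 fun n => r (e * n + α) :=
  ⟨hr.1.comp_mul_add he α, fun _ => hr.2 _⟩

lemma rtn1_one : RTN1 fun _ => 1 :=
  ⟨⟨.of_forall fun _ => one_pos, by simp⟩, fun _ => ⟨1, Nat.cast_one.symm⟩⟩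

lemma mk_cauchy (a b : ℕ → ℝ) :
    PowerSeries.mk (cauchy a b) = PowerSeries.mk a * PowerSeries.mk b := by
  ext n
  rw [coeff_mk, coeff_mul, Finset.Nat.sum_antidiagonal_eq_sum_range_succ_mk]
  simp [cauchy]

lemma mk_xPowMul (c : ℕ) (a : ℕ → ℝ) :
    PowerSeries.mk (xPowMul c a) = X ^ c * PowerSeries.mk a := by
  ext n
  rw [coeff_mk, coeff_X_pow_mul', xPowMul]
  simp [coeff_mk]

lemma mk_substPow {d : ℕ} (hd : d ≠ 0) (r : ℕ → ℝ) :
    PowerSeries.mk (substPow d r) = expand d hd (PowerSeries.mk r) := by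
  ext n
  rw [coeff_mk, coeff_expand, substPow, coeff_mk]

lemma mk_eq_sum_X_pow_mul_expand {e : ℕ} (he : e ≠ 0) (r : ℕ → ℝ) :
    PowerSeries.mk r
      = ∑ α ∈ range e, X ^ α * expand e he (PowerSeries.mk fun n => r (e * n + α)) := by
  ext n
  simp only [coeff_mk, map_sum, coeff_X_pow_mul', coeff_expand]
  rw [Finset.sum_eq_single (n % e)]
  · rw [if_pos (Nat.mod_le n e), if_pos (Nat.dvd_sub_mod n),
      Nat.mul_div_cancel' (Nat.dvd_sub_mod n), Nat.sub_add_cancel (Nat.mod_le n e)]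
  · intro α hα hne
    split_ifs with hαn hdvd
    · obtain ⟨t, ht⟩ := hdvd
      rw [show n = e * t + α by omega, Nat.mul_add_mod, Nat.mod_eq_of_lt (Finset.mem_range.1 hα)]
        at hne
      exact absurd rfl hne
    all_goals rfl
  · intro h; exact absurd (Finset.mem_range.2 (Nat.mod_lt n (Nat.pos_of_ne_zero he))) h

lemma mk_ne_zero {a : ℕ → ℝ} (ha : a ≠ 0) : PowerSeries.mk a ≠ 0 :=
  fun h => ha (funext fun n => by simpa using congrArg (coeff n) h)

lemma expand_expand_comm {d e : ℕ} (hd : d ≠ 0) (he : e ≠ 0) (f : ℝ⟦X⟧) :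
    expand e he (expand d hd f) = expand d hd (expand e he f) := by
  rw [← AlgHom.comp_apply, ← AlgHom.comp_apply, ← expand_mul_eq_comp, ← expand_mul_eq_comp]
  congr 2
  exact mul_comm e d

lemma mk_substPow_mul_mk_substPow {d e : ℕ} (hd : d ≠ 0) (he : e ≠ 0) (r s : ℕ → ℝ) :
    PowerSeries.mk (substPow d r) * PowerSeries.mk (substPow e s)
      = ∑ α ∈ range e, ∑ β ∈ range d, X ^ (d * α + e * β) * PowerSeries.mk
          (substPow (d * e) (cauchy (fun n => r (e * n + α)) (fun n => s (d * n + β)))) := by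
  conv_lhs => rw [mk_substPow hd, mk_substPow he, mk_eq_sum_X_pow_mul_expand he r,
    mk_eq_sum_X_pow_mul_expand hd s]
  simp only [map_sum, map_mul, map_pow, expand_X, Finset.sum_mul_sum]
  refine Finset.sum_congr rfl fun α _ => Finset.sum_congr rfl fun β _ => ?_
  rw [mk_substPow (mul_ne_zero hd he), mk_cauchy, map_mul, expand_mul_eq_comp d hd e he,
    expand_expand_comm hd he, AlgHom.comp_apply, AlgHom.comp_apply]
  ring

def sGenerators : Set ℝ⟦X⟧ :=
  {f | ∃ p, IsNatPoly p ∧ PowerSeries.mk p = f} ∪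
    {f | ∃ p r d, IsNatPoly p ∧ RTN1 r ∧ 1 ≤ d ∧
      PowerSeries.mk p * PowerSeries.mk (substPow d r) = f}

def HasSRepr (a : ℕ → ℝ) : Prop :=
  ∃ (k : ℕ) (p : ℕ → (ℕ → ℝ)) (R : ℕ → (ℕ → ℝ)) (d : ℕ → ℕ),
    IsNatPoly (p 0) ∧
    (∀ i ∈ Finset.Icc 1 k, IsNatPoly (p i) ∧ RTN1 (R i) ∧ 1 ≤ d i) ∧
    ∀ n, a n = p 0 n + ∑ i ∈ Finset.Icc 1 k, cauchy (p i) (substPow (d i) (R i)) n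

lemma hasSRepr_zero : HasSRepr 0 :=
  ⟨0, fun _ => 0, fun _ => 0, fun _ => 1, isNatPoly_zero, by simp, by simp⟩

lemma HasSRepr.natPoly_add {a q : ℕ → ℝ} (ha : HasSRepr a) (hq : IsNatPoly q) :
    HasSRepr (q + a) := by
  obtain ⟨k, p, R, d, h0, hi, ha⟩ := ha
  refine ⟨k, Function.update p 0 (q + p 0), R, d, ?_, fun i hi' => ?_, fun n => ?_⟩
  · simpa using hq.add h0
  · rw [Function.update_of_ne (by have := Finset.mem_Icc.1 hi'; omega)]
    exact hi i hi'
  · rw [Pi.add_apply, ha n, Function.update_self, Pi.add_apply, add_assoc]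
    congr 2
    apply Finset.sum_congr rfl
    intro i hi'
    rw [Function.update_of_ne (by have := Finset.mem_Icc.1 hi'; omega)]

lemma HasSRepr.cauchy_substPow_add {a q r : ℕ → ℝ} {e : ℕ} (ha : HasSRepr a)
    (hq : IsNatPoly q) (hr : RTN1 r) (he : 1 ≤ e) : HasSRepr (cauchy q (substPow e r) + a) := by
  obtain ⟨k, p, R, d, h0, hi, ha⟩ := ha
  refine ⟨k + 1, Function.update p (k + 1) q, Function.update R (k + 1) r,
    Function.update d (k + 1) e, ?_, fun i hi' => ?_, fun n => ?_⟩
  · rwa [Function.update_of_ne (by omega)]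
  · rcases eq_or_ne i (k + 1) with rfl | hik
    · simpa using ⟨hq, hr, he⟩
    · simp only [Function.update_of_ne hik]
      exact hi i (Finset.mem_Icc.2 (by have := Finset.mem_Icc.1 hi'; omega))
  · have hsum : ∑ i ∈ Finset.Icc 1 k, cauchy (Function.update p (k + 1) q i)
        (substPow (Function.update d (k + 1) e i) (Function.update R (k + 1) r i)) n
        = ∑ i ∈ Finset.Icc 1 k, cauchy (p i) (substPow (d i) (R i)) n :=
      Finset.sum_congr rfl fun i hi' => by
        simp only [Function.update_of_ne (show i ≠ k + 1 by have := Finset.mem_Icc.1 hi'; omega)]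
    rw [Pi.add_apply, ha n, Finset.sum_Icc_succ_top (by omega), hsum,
      Function.update_of_ne (by omega : 0 ≠ k + 1)]
    simp only [Function.update_self]
    ring

def sClosure : AddSubmonoid ℝ⟦X⟧ := AddSubmonoid.closure sGenerators

lemma hasSRepr_iff_mk_mem {a : ℕ → ℝ} : HasSRepr a ↔ PowerSeries.mk a ∈ sClosure := by
  constructor
  · rintro ⟨k, p, R, d, h0, hi, ha⟩
    have : PowerSeries.mk a = PowerSeries.mk (p 0)
        + ∑ i ∈ Icc 1 k, PowerSeries.mk (p i) * PowerSeries.mk (substPow (d i) (R i)) := by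
      ext n
      simp [ha n, map_sum, ← mk_cauchy]
    rw [this]
    refine add_mem (AddSubmonoid.subset_closure (.inl ⟨_, h0, rfl⟩))
      (sum_mem fun i hi' => AddSubmonoid.subset_closure (.inr ?_))
    obtain ⟨hp, hr, hd⟩ := hi i hi'
    exact ⟨_, _, _, hp, hr, hd, rfl⟩
  · intro h
    suffices ∀ f ∈ sClosure, HasSRepr fun n => coeff n f by simpa using this _ h
    intro f hf
    induction hf using AddSubmonoid.closure_induction_left with
    | zero =>
      convert hasSRepr_zero
      simp
    | add_left f hf g _ ih =>
      rcases hf with ⟨q, hq, rfl⟩ | ⟨q, r, e, hq, hr, he, rfl⟩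
      · convert ih.natPoly_add hq using 1
        ext n; simp
      · convert ih.cauchy_substPow_add hq hr he using 1
        ext n; simp [← mk_cauchy]

lemma natPoly_mul_mem_sGenerators {p : ℕ → ℝ} (hp : IsNatPoly p) {g : ℝ⟦X⟧}
    (hg : g ∈ sGenerators) : PowerSeries.mk p * g ∈ sGenerators := by
  rcases hg with ⟨q, hq, rfl⟩ | ⟨q, r, e, hq, hr, he, rfl⟩
  · exact .inl ⟨_, hp.cauchy hq, mk_cauchy p q⟩
  · exact .inr ⟨_, r, e, hp.cauchy hq, hr, he, by rw [mk_cauchy, mul_assoc]⟩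

lemma mk_mul_substPow_mul_mem_sClosure {p q r s : ℕ → ℝ} {d e : ℕ} (hp : IsNatPoly p)
    (hq : IsNatPoly q) (hr : RTN1 r) (hs : RTN1 s) (hd : 1 ≤ d) (he : 1 ≤ e) :
    PowerSeries.mk p * PowerSeries.mk (substPow d r)
      * (PowerSeries.mk q * PowerSeries.mk (substPow e s)) ∈ sClosure := by
  rw [mul_mul_mul_comm, mk_substPow_mul_mk_substPow (by omega) (by omega), Finset.mul_sum]
  refine sum_mem fun α _ => ?_
  rw [Finset.mul_sum]
  refine sum_mem fun β _ => AddSubmonoid.subset_closure (.inr ⟨_, _, d * e,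
    (hp.cauchy hq).xPowMul (d * α + e * β),
    (hr.comp_mul_add (e := e) (by omega) α).cauchy (hs.comp_mul_add (e := d) (by omega) β),
    Nat.one_le_iff_ne_zero.2 (by positivity), ?_⟩)
  rw [mk_xPowMul, mk_cauchy]
  ring

open scoped Pointwise in
lemma mul_mem_sClosure {f g : ℝ⟦X⟧} (hf : f ∈ sClosure) (hg : g ∈ sClosure) :
    f * g ∈ sClosure := by
  suffices sClosure * sClosure ≤ sClosure from this (AddSubmonoid.mul_mem_mul hf hg)
  rw [sClosure, AddSubmonoid.closure_mul_closure, AddSubmonoid.closure_le]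
  rintro _ ⟨f, hf, g, hg, rfl⟩
  show f * g ∈ sClosure
  rcases hf with ⟨p, hp, rfl⟩ | ⟨p, r, d, hp, hr, hd, rfl⟩
  · exact AddSubmonoid.subset_closure (natPoly_mul_mem_sGenerators hp hg)
  rcases hg with ⟨q, hq, rfl⟩ | ⟨q, s, e, hq, hs, he, rfl⟩
  · rw [mul_comm _ (PowerSeries.mk q)]
    exact AddSubmonoid.subset_closure
      (natPoly_mul_mem_sGenerators hq (.inr ⟨p, r, d, hp, hr, hd, rfl⟩))
  · exact mk_mul_substPow_mul_mem_sClosure hp hq hr hs hd he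

section InS

variable {P Q : ℕ → ℝ}

lemma InS.natCast_mul (hP : InS P) {k : ℕ} (hk : 1 ≤ k) : InS fun n => (k : ℝ) * P n := by
  obtain ⟨hne, h0, hnat, hrepr : HasSRepr P⟩ := hP
  have hk' : (k : ℝ) ≠ 0 := by positivity
  refine ⟨fun h => hne (funext fun n => ?_), by simp [h0], hnat.natCast_mul k,
    hasSRepr_iff_mk_mem.2 ?_⟩
  · simpa [hk'] using congrFun h n
  · have : PowerSeries.mk (fun n => (k : ℝ) * P n) = k • PowerSeries.mk P := by
      ext n; rw [coeff_mk, map_nsmul, coeff_mk, nsmul_eq_mul]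
    exact this ▸ nsmul_mem (hasSRepr_iff_mk_mem.1 hrepr) k

lemma InS.add (hP : InS P) (hQ : InS Q) : InS fun n => P n + Q n := by
  obtain ⟨hPne, hP0, hPnat, hPrepr : HasSRepr P⟩ := hP
  obtain ⟨hQne, hQ0, hQnat, hQrepr : HasSRepr Q⟩ := hQ
  refine ⟨fun h => hPne (funext fun n => ?_), by simp [hP0, hQ0], hPnat.add hQnat,
    hasSRepr_iff_mk_mem.2 ?_⟩
  · have := congrFun h n
    simp only [Pi.zero_apply] at this ⊢
    linarith [hPnat.nonneg n, hQnat.nonneg n]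
  · rw [hasSRepr_iff_mk_mem] at hPrepr hQrepr
    have : PowerSeries.mk (fun n => P n + Q n) = PowerSeries.mk P + PowerSeries.mk Q := by
      ext n; simp
    exact this ▸ add_mem hPrepr hQrepr

lemma InS.cauchy (hP : InS P) (hQ : InS Q) : InS (cauchy P Q) := by
  obtain ⟨hPne, hP0, hPnat, hPrepr : HasSRepr P⟩ := hP
  obtain ⟨hQne, hQ0, hQnat, hQrepr : HasSRepr Q⟩ := hQ
  rw [hasSRepr_iff_mk_mem] at hPrepr hQrepr
  refine ⟨fun h => ?_, by simp [_root_.cauchy, hP0], hPnat.cauchy hQnat,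
    hasSRepr_iff_mk_mem.2 ?_⟩
  · exact mul_ne_zero (mk_ne_zero hPne) (mk_ne_zero hQne) (by rw [← mk_cauchy, h]; ext; simp)
  · exact mk_cauchy P Q ▸ mul_mem_sClosure hPrepr hQrepr

end InS

lemma mk_X : PowerSeries.mk (fun n => if n = 1 then (1 : ℝ) else 0) = X := by
  ext n; simp [coeff_X]

lemma isNatPoly_X : IsNatPoly fun n => if n = 1 then (1 : ℝ) else 0 :=
  ⟨isNatSeries_indicator _, 2, fun n hn => if_neg (by omega)⟩

lemma inS_X : InS fun n => if n = 1 then (1 : ℝ) else 0 :=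
  ⟨fun h => by simpa using congrFun h 1, by simp, isNatPoly_X.1,
    hasSRepr_iff_mk_mem.2 (AddSubmonoid.subset_closure (.inl ⟨_, isNatPoly_X, rfl⟩))⟩

lemma inS_X_div_one_sub_X_pow {m : ℕ} (hm : 1 ≤ m) :
    InS fun n => if 1 ≤ n ∧ m ∣ (n - 1) then (1 : ℝ) else 0 := by
  refine ⟨fun h => by simpa using congrFun h 1, by simp, isNatSeries_indicator _,
    hasSRepr_iff_mk_mem.2 ?_⟩
  have : PowerSeries.mk (fun n => if 1 ≤ n ∧ m ∣ (n - 1) then (1 : ℝ) else 0)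
      = PowerSeries.mk (fun n => if n = 1 then (1 : ℝ) else 0)
        * PowerSeries.mk (substPow m fun _ => 1) := by
    rw [mk_X]
    ext n
    rcases n with _ | n
    · simp
    · simp [coeff_succ_X_mul, substPow]
  rw [this]
  exact AddSubmonoid.subset_closure (.inr ⟨_, _, m, isNatPoly_X, rtn1_one, hm, rfl⟩)

/-- `𝔖` contains `x` and `x/(1-x^m)` for `m ≥ 1`, and is closed under multiplication by
positive integers, addition, and Cauchy product. -/
theorem S_basic_and_closure :
    InS (fun n => if n = 1 then (1 : ℝ) else 0) ∧
    (∀ m : ℕ, 1 ≤ m → InS (fun n => if 1 ≤ n ∧ m ∣ (n - 1) then (1 : ℝ) else 0)) ∧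
    (∀ P Q : ℕ → ℝ, InS P → InS Q → ∀ k : ℕ, 1 ≤ k →
      InS (fun n => (k : ℝ) * P n) ∧ InS (fun n => P n + Q n) ∧ InS (cauchy P Q)) :=
  ⟨inS_X, fun _ hm => inS_X_div_one_sub_X_pow hm,
    fun _ _ hP hQ _ hk => ⟨hP.natCast_mul hk, hP.add hQ, hP.cauchy hQ⟩⟩
end
end

section
/- Suppose Q(x) ∈ 𝔔. Then the power series Q̂(x), with coefficients q̂(0)=0 and q̂(n) = ∑_{m=1}^n ⌊n/m⌋·m·q(m) for n ≥ 1, belongs to RT1. -/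
open Filter Finset

noncomputable section

/-!
Writing `a(m) = m·q(m)`, the increment `q̂(n) - q̂(n-1)` is the divisor sum `∑_{m ∣ n} a(m)`,
so it suffices to show that this divisor sum is eventually at most `δ·q̂(n)` for every `δ > 0`.
Divisors `m ≤ n/J` contribute at most `q̂(n)/J`, since each of them carries weight `⌊n/m⌋ ≥ J`
in `q̂(n)`. There are at most `J` divisors `m > n/J`, and each has `a(m) ≤ 4·q̂(n)/K`: because
`r(j-1)/r(j) → 1`, the `K` terms `a(m - d), …, a(m - K·d)` of `q̂(n)` are each at least `a(m)/4`
once `m` is large.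
-/

/-- `∑_{m=1}^n ⌊n/m⌋·a(m)`; for `a(m) = m·q(m)` this is `q̂(n)`. -/
def floorWeightedSum (a : ℕ → ℝ) (n : ℕ) : ℝ := ∑ m ∈ Icc 1 n, ((n / m : ℕ) : ℝ) * a m

section floorWeightedSum

variable {a : ℕ → ℝ}

theorem floorWeightedSum_eq_sum_divisors (ha : a 0 = 0) (n : ℕ) :
    floorWeightedSum a n = ∑ k ∈ Icc 1 n, ∑ m ∈ k.divisors, a m := by
  let A : ArithmeticFunction ℝ := ⟨a, ha⟩
  have hIcc : Icc 1 n = Ioc 0 n := rfl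
  have := ArithmeticFunction.sum_Ioc_mul_zeta_eq_sum A n
  simp only [ArithmeticFunction.coe_mul_zeta_apply] at this
  rw [floorWeightedSum, hIcc]
  exact (sum_congr rfl fun m _ => mul_comm _ _).trans this.symm

theorem floorWeightedSum_succ (ha : a 0 = 0) (n : ℕ) :
    floorWeightedSum a (n + 1) = floorWeightedSum a n + ∑ m ∈ (n + 1).divisors, a m := by
  simp only [floorWeightedSum_eq_sum_divisors ha, sum_Icc_succ_top (Nat.le_add_left 1 n)]

theorem sum_le_floorWeightedSum (ha : 0 ≤ a) {n : ℕ} {S : Finset ℕ} (hS : S ⊆ Icc 1 n) :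
    ∑ m ∈ S, a m ≤ floorWeightedSum a n := by
  calc ∑ m ∈ S, a m ≤ ∑ m ∈ S, ((n / m : ℕ) : ℝ) * a m := by
        refine sum_le_sum fun m hm => le_mul_of_one_le_left (ha m) ?_
        have hm := mem_Icc.1 (hS hm)
        exact_mod_cast (Nat.one_le_div_iff (by omega)).2 hm.2
    _ ≤ floorWeightedSum a n :=
        sum_le_sum_of_subset_of_nonneg hS fun m _ _ => mul_nonneg (Nat.cast_nonneg _) (ha m)

theorem floorWeightedSum_nonneg (ha : 0 ≤ a) (n : ℕ) : 0 ≤ floorWeightedSum a n := by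
  simpa using sum_le_floorWeightedSum ha (empty_subset (Icc 1 n))

theorem floorWeightedSum_pos (ha : 0 ≤ a) {m n : ℕ} (hm : 0 < m) (hmn : m ≤ n) (ham : 0 < a m) :
    0 < floorWeightedSum a n := by
  have := sum_le_floorWeightedSum ha (singleton_subset_iff.2 (mem_Icc.2 ⟨hm, hmn⟩))
  rw [sum_singleton] at this
  exact ham.trans_le this

theorem mul_sum_Icc_div_le_floorWeightedSum (ha : 0 ≤ a) (n J : ℕ) :
    J * ∑ m ∈ Icc 1 (n / J), a m ≤ floorWeightedSum a n := by
  rw [mul_sum]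
  calc ∑ m ∈ Icc 1 (n / J), (J : ℝ) * a m ≤ ∑ m ∈ Icc 1 (n / J), ((n / m : ℕ) : ℝ) * a m := by
        refine sum_le_sum fun m hm => mul_le_mul_of_nonneg_right ?_ (ha m)
        have hm := mem_Icc.1 hm
        have hJ : 0 < J := Nat.pos_of_ne_zero fun h => by simp [h] at hm; omega
        have hmJ := (Nat.le_div_iff_mul_le hJ).1 hm.2
        exact_mod_cast (Nat.le_div_iff_mul_le (by omega)).2 (by rwa [mul_comm])
    _ ≤ floorWeightedSum a n :=
        sum_le_sum_of_subset_of_nonneg (Icc_subset_Icc_right (Nat.div_le_self n J))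
          fun m _ _ => mul_nonneg (Nat.cast_nonneg _) (ha m)

theorem mul_le_floorWeightedSum (ha : 0 ≤ a) {C : ℝ} (hC : 0 ≤ C) {d K m n : ℕ} (hd : 0 < d)
    (hKm : K * d < m) (hmn : m ≤ n) (hcomp : ∀ i ∈ Icc 1 K, a m ≤ C * a (m - i * d)) :
    K * a m ≤ C * floorWeightedSum a n := by
  have hinj : Set.InjOn (fun i => m - i * d) (Icc 1 K) := by
    intro i hi j hj hij
    have := Nat.mul_le_mul_right d (mem_Icc.1 hi).2
    have := Nat.mul_le_mul_right d (mem_Icc.1 hj).2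
    exact Nat.eq_of_mul_eq_mul_right hd (by simp only at hij; omega)
  have hsub : (Icc 1 K).image (fun i => m - i * d) ⊆ Icc 1 n := by
    intro x hx
    obtain ⟨i, hi, rfl⟩ := mem_image.1 hx
    have := Nat.mul_le_mul_right d (mem_Icc.1 hi).2
    exact mem_Icc.2 ⟨by omega, by omega⟩
  calc (K : ℝ) * a m = ∑ i ∈ Icc 1 K, a m := by simp
    _ ≤ ∑ i ∈ Icc 1 K, C * a (m - i * d) := sum_le_sum hcomp
    _ = C * ∑ x ∈ (Icc 1 K).image (fun i => m - i * d), a x := by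
        rw [sum_image hinj, mul_sum]
    _ ≤ C * floorWeightedSum a n := by
        gcongr
        exact sum_le_floorWeightedSum ha hsub

theorem card_divisors_filter_div_lt_le (n : ℕ) {J : ℕ} (hJ : 0 < J) :
    #{m ∈ n.divisors | n / J < m} ≤ J := by
  calc #{m ∈ n.divisors | n / J < m} ≤ #(range J) := by
        refine card_le_card_of_injOn (fun m => n / m) ?_ ?_
        · intro m hm
          simp only [coe_filter, Nat.mem_divisors, Set.mem_ofPred_eq] at hm
          have hm0 : 0 < m := Nat.pos_of_dvd_of_pos hm.1.1 (Nat.pos_of_ne_zero hm.1.2)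
          rw [coe_range, Set.mem_Iio, Nat.div_lt_iff_lt_mul hm0, mul_comm]
          exact (Nat.div_lt_iff_lt_mul hJ).1 hm.2
        · intro m₁ h₁ m₂ h₂ h
          simp only [coe_filter, Nat.mem_divisors, Set.mem_ofPred_eq] at h₁ h₂
          rw [← Nat.div_div_self h₁.1.1 h₁.1.2, ← Nat.div_div_self h₂.1.1 h₂.1.2]
          exact congrArg (n / ·) h
    _ = J := card_range J

theorem eventually_sum_divisors_le_mul_floorWeightedSum (ha : 0 ≤ a) {C : ℝ} (hC : 0 ≤ C)
    {d : ℕ} (hd : 0 < d) (hcomp : ∀ K : ℕ, ∀ᶠ m in atTop, ∀ i ∈ Icc 1 K, a m ≤ C * a (m - i * d))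
    {δ : ℝ} (hδ : 0 < δ) :
    ∀ᶠ n in atTop, ∑ m ∈ n.divisors, a m ≤ δ * floorWeightedSum a n := by
  obtain ⟨J, hJ⟩ := exists_nat_gt (2 / δ)
  have hJ0 : (0 : ℝ) < J := (by positivity : (0 : ℝ) < 2 / δ).trans hJ
  obtain ⟨K, hK⟩ := exists_nat_gt (2 * C * J / δ)
  have hK0 : (0 : ℝ) < K := (by positivity : (0 : ℝ) ≤ 2 * C * J / δ).trans_lt hK
  obtain ⟨M, hM⟩ := eventually_atTop.1 (hcomp K)
  filter_upwards [eventually_ge_atTop (J * (M + K * d + 1))] with n hn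
  set f := floorWeightedSum a n
  have hf : 0 ≤ f := floorWeightedSum_nonneg ha n
  have hnJ : M + K * d + 1 ≤ n / J :=
    (Nat.le_div_iff_mul_le (by exact_mod_cast hJ0)).2 (by rwa [mul_comm])
  have hsmall : ∑ m ∈ n.divisors with ¬ n / J < m, a m ≤ δ / 2 * f := by
    have hsub : {m ∈ n.divisors | ¬ n / J < m} ⊆ Icc 1 (n / J) := fun m hm => by
      simp only [mem_filter, Nat.mem_divisors, not_lt] at hm
      exact mem_Icc.2 ⟨Nat.pos_of_dvd_of_pos hm.1.1 (Nat.pos_of_ne_zero hm.1.2), hm.2⟩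
    calc ∑ m ∈ n.divisors with ¬ n / J < m, a m ≤ ∑ m ∈ Icc 1 (n / J), a m :=
          sum_le_sum_of_subset_of_nonneg hsub fun m _ _ => ha m
      _ ≤ f / J := by
          rw [le_div_iff₀ hJ0, mul_comm]
          exact mul_sum_Icc_div_le_floorWeightedSum ha n J
      _ ≤ δ / 2 * f := by
          rw [div_le_iff₀ hJ0]
          rw [div_lt_iff₀ hδ] at hJ
          nlinarith
  have hlarge : ∑ m ∈ n.divisors with n / J < m, a m ≤ δ / 2 * f := by
    calc ∑ m ∈ n.divisors with n / J < m, a m ≤ ∑ m ∈ n.divisors with n / J < m, C * f / K := by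
          refine sum_le_sum fun m hm => ?_
          simp only [mem_filter, Nat.mem_divisors] at hm
          rw [le_div_iff₀ hK0, mul_comm]
          exact mul_le_floorWeightedSum ha hC hd (by omega)
            (Nat.le_of_dvd (Nat.pos_of_ne_zero hm.1.2) hm.1.1) (hM m (by omega))
      _ ≤ J * (C * f / K) := by
          rw [sum_const, nsmul_eq_mul]
          gcongr
          exact_mod_cast card_divisors_filter_div_lt_le n (by exact_mod_cast hJ0)
      _ ≤ δ / 2 * f := by
          rw [mul_div_assoc', div_le_iff₀ hK0]
          rw [div_lt_iff₀ hδ] at hK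
          nlinarith [mul_nonneg hC hf]
  rw [← sum_filter_not_add_sum_filter n.divisors (fun m => n / J < m)]
  linarith

end floorWeightedSum

theorem RT1_of_eventually_sub_pred_le {f : ℕ → ℝ} (hpos : ∀ᶠ n in atTop, 0 < f n)
    (hsub : ∀ δ > 0, ∀ᶠ n in atTop, 0 ≤ f n - f (n - 1) ∧ f n - f (n - 1) ≤ δ * f n) :
    RT1 f := by
  refine ⟨hpos, ?_⟩
  have hratio : Tendsto (fun n => (f n - f (n - 1)) / f n) atTop (nhds 0) := by
    refine tendsto_order.2 ⟨fun b hb => ?_, fun b hb => ?_⟩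
    · filter_upwards [hpos, hsub 1 one_pos] with n hn hn'
      exact hb.trans_le (div_nonneg hn'.1 hn.le)
    · filter_upwards [hpos, hsub (b / 2) (half_pos hb)] with n hn hn'
      rw [div_lt_iff₀ hn]
      nlinarith
  have hone := (tendsto_const_nhds (x := (1 : ℝ))).sub hratio
  rw [sub_zero] at hone
  refine hone.congr' ?_
  filter_upwards [hpos] with n hn
  field_simp
  ring

theorem RT1.tendsto_sub_div {r : ℕ → ℝ} (hr : RT1 r) (i : ℕ) :
    Tendsto (fun n => r (n - i) / r n) atTop (nhds 1) := by
  induction i with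
  | zero =>
    refine tendsto_const_nhds.congr' ?_
    filter_upwards [hr.1] with n hn
    simp [hn.ne']
  | succ i ih =>
    have hshift := hr.2.comp (tendsto_sub_atTop_nat i)
    have hprod := hshift.mul ih
    rw [one_mul] at hprod
    refine hprod.congr' ?_
    filter_upwards [(tendsto_sub_atTop_nat i).eventually hr.1] with n hn
    simp only [Function.comp_apply, Nat.sub_sub]
    field_simp [hn.ne']

theorem RT1.eventually_le_two_mul {r : ℕ → ℝ} (hr : RT1 r) (K : ℕ) :
    ∀ᶠ j in atTop, ∀ i ∈ Icc 1 K, r j ≤ 2 * r (j - i) := by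
  have hhalf : ∀ i, ∀ᶠ j in atTop, 1 / 2 < r (j - i) / r j := fun i =>
    (hr.tendsto_sub_div i).eventually (lt_mem_nhds (by norm_num))
  filter_upwards [hr.1, (eventually_all_finset (Icc 1 K)).2 fun i _ => hhalf i] with j hj hij i hi
  have hi' := hij i hi
  rw [lt_div_iff₀ hj] at hi'
  linarith

theorem IsNatSeries.nonneg_s12 {r : ℕ → ℝ} (hr : IsNatSeries r) : 0 ≤ r := fun n => by
  obtain ⟨k, hk⟩ := hr n
  exact hk ▸ Nat.cast_nonneg k

section xPowMul_substPow

variable {c d : ℕ} {r : ℕ → ℝ}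

theorem xPowMul_substPow_nonneg (hr : 0 ≤ r) : 0 ≤ xPowMul c (substPow d r) := fun m => by
  simp only [Pi.zero_apply, xPowMul, substPow]
  split_ifs <;> first | exact hr _ | exact le_rfl

theorem xPowMul_substPow_add_mul (hd : 0 < d) (j : ℕ) :
    xPowMul c (substPow d r) (c + j * d) = r j := by
  simp [xPowMul, substPow, Nat.mul_div_cancel j hd]

theorem exists_eq_add_mul_of_xPowMul_substPow_ne_zero {m : ℕ}
    (hm : xPowMul c (substPow d r) m ≠ 0) : ∃ j, m = c + j * d := by
  unfold xPowMul substPow at hm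
  split_ifs at hm with hcm hdvd
  · obtain ⟨j, hj⟩ := hdvd
    exact ⟨j, by rw [mul_comm]; omega⟩
  all_goals exact absurd rfl hm

theorem eventually_mul_xPowMul_substPow_le (hr : RT1 r) (hr0 : 0 ≤ r) (hd : 0 < d) (K : ℕ) :
    ∀ᶠ m : ℕ in atTop, ∀ i ∈ Icc 1 K, (m : ℝ) * xPowMul c (substPow d r) m ≤
      4 * (((m - i * d : ℕ) : ℝ) * xPowMul c (substPow d r) (m - i * d)) := by
  have hq0 := xPowMul_substPow_nonneg (c := c) (d := d) hr0
  obtain ⟨J, hJ⟩ := eventually_atTop.1 (hr.eventually_le_two_mul K)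
  filter_upwards [eventually_ge_atTop (c + (J + K) * d), eventually_ge_atTop (2 * (K * d))]
    with m hmJ hmK i hi
  by_cases hqm : xPowMul c (substPow d r) m = 0
  · rw [hqm, mul_zero]
    exact mul_nonneg zero_le_four (mul_nonneg (Nat.cast_nonneg _) (hq0 _))
  obtain ⟨j, rfl⟩ := exists_eq_add_mul_of_xPowMul_substPow_ne_zero hqm
  have hjJ : J + K ≤ j := Nat.le_of_mul_le_mul_right (Nat.le_of_add_le_add_left hmJ) hd
  have hid : i * d ≤ K * d := Nat.mul_le_mul_right d (mem_Icc.1 hi).2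
  have hij : i * d ≤ j * d := Nat.mul_le_mul_right d (by simp only [mem_Icc] at hi; omega)
  have hsub_mul := Nat.sub_mul j i d
  have hshift : c + j * d - i * d = c + (j - i) * d := by omega
  have hhalf : ((c + j * d : ℕ) : ℝ) ≤ 2 * ((c + (j - i) * d : ℕ) : ℝ) := by
    exact_mod_cast (show c + j * d ≤ 2 * (c + (j - i) * d) by omega)
  rw [hshift, xPowMul_substPow_add_mul hd, xPowMul_substPow_add_mul hd]
  calc ((c + j * d : ℕ) : ℝ) * r j ≤ (2 * ((c + (j - i) * d : ℕ) : ℝ)) * (2 * r (j - i)) :=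
        mul_le_mul hhalf (hJ j (by omega) i hi) (hr0 j) (by positivity [hr0 (j - i)])
    _ = 4 * (((c + (j - i) * d : ℕ) : ℝ) * r (j - i)) := by ring

end xPowMul_substPow

/-- For `Q ∈ 𝔔`, the series `Q̂(x)` with `q̂(n) = ∑_{m=1}^n ⌊n/m⌋·m·q(m)` is in `RT1`. -/
theorem qhat_RT1 (q : ℕ → ℝ) (hq : InQ q) :
    RT1 (fun n => ∑ m ∈ Finset.Icc 1 n, ((n / m : ℕ) : ℝ) * ((m : ℝ) * q m)) := by
  obtain ⟨-, c, d, r, hcd, ⟨hr, hnat⟩, rfl⟩ := hq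
  have hd : 0 < d := by omega
  set a : ℕ → ℝ := fun m => m * xPowMul c (substPow d r) m
  have ha : 0 ≤ a := fun m => mul_nonneg m.cast_nonneg (xPowMul_substPow_nonneg hnat.nonneg_s12 m)
  have ha0 : a 0 = 0 := by simp [a]
  change RT1 (floorWeightedSum a)
  refine RT1_of_eventually_sub_pred_le ?_ fun δ hδ => ?_
  · obtain ⟨j, hj, hj1⟩ := (hr.1.and (eventually_ge_atTop 1)).exists
    have ham : 0 < a (c + j * d) := by
      simp only [a, xPowMul_substPow_add_mul hd]
      exact mul_pos (by exact_mod_cast (by positivity : 0 < c + j * d)) hj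
    filter_upwards [eventually_ge_atTop (c + j * d)] with n hn
    exact floorWeightedSum_pos ha (by positivity) hn ham
  · filter_upwards [eventually_ge_atTop 1, eventually_sum_divisors_le_mul_floorWeightedSum ha
      zero_le_four hd (eventually_mul_xPowMul_substPow_le hr hnat.nonneg_s12 hd) hδ] with n hn hsum
    obtain ⟨k, rfl⟩ : ∃ k, n = k + 1 := ⟨n - 1, by omega⟩
    rw [Nat.add_sub_cancel, floorWeightedSum_succ ha0, add_sub_cancel_left]
    exact ⟨sum_nonneg fun m _ => ha m, floorWeightedSum_succ ha0 k ▸ hsum⟩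
end
end

section
/- Every power series A(x) in the class 𝔊 has radius of convergence at least 1. -/
open Filter Finset

noncomputable section

/-- Cauchy product of a finite tuple of coefficient sequences. -/
def cauchyProd : (j : ℕ) → (Fin j → (ℕ → ℝ)) → (ℕ → ℝ)
  | 0, _ => fun n => if n = 0 then 1 else 0
  | j + 1, f => cauchy (f 0) (cauchyProd j fun i => f i.succ)

open Classical in
/-- The Pólya operator `E_m`:  `E_0(A) = 1` and for `m ≥ 1`
`E_m(A) = ∑_{j=1}^m (1/j!) ∑_{m₁+⋯+m_j=m, m_i ≥ 1} (1/(m₁⋯m_j)) A(x^{m₁})⋯A(x^{m_j})`. -/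
def Em (m : ℕ) (a : ℕ → ℝ) : ℕ → ℝ :=
  if m = 0 then (fun n => if n = 0 then 1 else 0)
  else fun n =>
    ∑ j ∈ Finset.Icc 1 m, (1 / (Nat.factorial j : ℝ)) *
      ∑ t ∈ (Finset.Nat.antidiagonalTuple j m).filter (fun t => ∀ i, 1 ≤ t i),
        (1 / ∏ i, (t i : ℝ)) * cauchyProd j (fun i => substPow (t i) a) n

/-- The Pólya operator `E_{≥ m}(A) := ∑_{j=m}^∞ E_j(A)`. -/
def Ege (m : ℕ) (a : ℕ → ℝ) : ℕ → ℝ := fun n => ∑' j : ℕ, if m ≤ j then Em j a n else 0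

/-- The class `𝔊`: the smallest class of power series containing `x` and `x/(1-x^m)`
(`m ≥ 1`) and closed under addition, Cauchy product, `E_m` and `E_{≥m}` (`m ≥ 1`). -/
inductive InG : (ℕ → ℝ) → Prop
  | X : InG (fun n => if n = 1 then (1 : ℝ) else 0)
  | geom : ∀ m : ℕ, 1 ≤ m → InG (fun n => if 1 ≤ n ∧ m ∣ (n - 1) then (1 : ℝ) else 0)
  | add : ∀ a b : ℕ → ℝ, InG a → InG b → InG (fun n => a n + b n)
  | mul : ∀ a b : ℕ → ℝ, InG a → InG b → InG (cauchy a b)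
  | em : ∀ (a : ℕ → ℝ) (m : ℕ), 1 ≤ m → InG a → InG (Em m a)
  | ege : ∀ (a : ℕ → ℝ) (m : ℕ), 1 ≤ m → InG a → InG (Ege m a)

/-! Induct over `𝔊` with a stronger invariant: zero constant term, nonnegative coefficients and
convergence on `[0, 1)`. Sums, Cauchy products and substitutions `x ↦ x^d` preserve convergence, so
`E_m(A)` converges on `[0, 1)`, its value at `y` being the cycle index of `S_m` at
`A(y), A(y²), …`. Since `A(y^d) ≤ y^(d-1) A(y)`, this value is at most `exp (A(y) / (1 - y))`
uniformly in `m`, and by nonnegativity so is every term of the series `E_m(A)(y)`. As `E_j(A)` has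
no terms below degree `j`, the `n`-th coefficient of `E_{≥m}(A)` is a sum of at most `n + 1`
coefficients of the `E_j(A)`, hence `O((n + 1) y^(-n))` for every `y < 1`. -/

section Cauchy

variable {a b : ℕ → ℝ} {x : ℝ}

lemma cauchy_nonneg (ha : ∀ n, 0 ≤ a n) (hb : ∀ n, 0 ≤ b n) (n : ℕ) : 0 ≤ cauchy a b n :=
  sum_nonneg fun k _ => mul_nonneg (ha k) (hb _)

lemma cauchy_eq_zero_of_lt {d e n : ℕ} (ha : ∀ k < d, a k = 0) (hb : ∀ k < e, b k = 0)
    (hn : n < d + e) : cauchy a b n = 0 := by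
  refine sum_eq_zero fun k hk => ?_
  rw [mem_range] at hk
  rcases lt_or_ge k d with h | h
  · rw [ha k h, zero_mul]
  · rw [hb (n - k) (by omega), mul_zero]

lemma cauchy_mul_pow (a b : ℕ → ℝ) (x : ℝ) (n : ℕ) :
    cauchy a b n * x ^ n = ∑ k ∈ range (n + 1), a k * x ^ k * (b (n - k) * x ^ (n - k)) := by
  rw [cauchy, sum_mul]
  refine sum_congr rfl fun k hk => ?_
  rw [← pow_mul_pow_sub x (Nat.le_of_lt_succ (mem_range.mp hk))]
  ring

lemma hasSum_cauchy_mul_pow {A B : ℝ} (hA : HasSum (fun n => a n * x ^ n) A)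
    (hB : HasSum (fun n => b n * x ^ n) B) : HasSum (fun n => cauchy a b n * x ^ n) (A * B) := by
  have := hasSum_sum_range_mul_of_summable_norm hA.summable.norm hB.summable.norm
  rw [hA.tsum_eq, hB.tsum_eq] at this
  simpa only [cauchy_mul_pow] using this

lemma cauchyProd_nonneg {j : ℕ} {f : Fin j → ℕ → ℝ} (hf : ∀ i n, 0 ≤ f i n) (n : ℕ) :
    0 ≤ cauchyProd j f n := by
  induction j generalizing n with
  | zero => simp only [cauchyProd]; split <;> norm_num
  | succ j ih => exact cauchy_nonneg (hf 0) (ih fun i => hf i.succ) n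

lemma cauchyProd_eq_zero_of_lt_sum {j : ℕ} {f : Fin j → ℕ → ℝ} {d : Fin j → ℕ}
    (hf : ∀ i, ∀ k < d i, f i k = 0) {n : ℕ} (hn : n < ∑ i, d i) : cauchyProd j f n = 0 := by
  induction j generalizing n with
  | zero => simp at hn
  | succ j ih =>
    rw [Fin.sum_univ_succ] at hn
    exact cauchy_eq_zero_of_lt (hf 0) (fun k hk => ih (fun i => hf i.succ) hk) hn

lemma hasSum_cauchyProd_mul_pow {j : ℕ} {f : Fin j → ℕ → ℝ} {A : Fin j → ℝ}
    (hA : ∀ i, HasSum (fun n => f i n * x ^ n) (A i)) :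
    HasSum (fun n => cauchyProd j f n * x ^ n) (∏ i, A i) := by
  induction j with
  | zero =>
    rw [Fin.prod_univ_zero]
    convert hasSum_ite_eq 0 (1 : ℝ) using 2 with n
    by_cases hn : n = 0 <;> simp [cauchyProd, hn]
  | succ j ih =>
    rw [Fin.prod_univ_succ]
    exact hasSum_cauchy_mul_pow (hA 0) (ih fun i => hA i.succ)

end Cauchy

section SubstPow

variable {a : ℕ → ℝ} {x : ℝ}

lemma substPow_nonneg (ha : ∀ n, 0 ≤ a n) (d n : ℕ) : 0 ≤ substPow d a n := by
  unfold substPow; split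
  · exact ha _
  · exact le_rfl

lemma substPow_eq_zero_of_lt (ha0 : a 0 = 0) {d n : ℕ} (hn : n < d) : substPow d a n = 0 := by
  simp [substPow, Nat.div_eq_of_lt hn, ha0]

lemma hasSum_substPow_mul_pow {d : ℕ} (hd : d ≠ 0) {A : ℝ}
    (h : HasSum (fun k => a k * (x ^ d) ^ k) A) :
    HasSum (fun n => substPow d a n * x ^ n) A := by
  refine (Function.Injective.hasSum_iff (mul_right_injective₀ hd) ?_).mp ?_
  · rintro n hn
    have : ¬ d ∣ n := fun ⟨k, hk⟩ => hn ⟨k, hk.symm⟩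
    simp [substPow, this]
  · convert h using 2 with k
    simp [substPow, Nat.mul_div_cancel_left k (Nat.pos_of_ne_zero hd), pow_mul]

lemma tsum_mul_pow_pow_le (ha0 : a 0 = 0) (ha : ∀ n, 0 ≤ a n) (hx0 : 0 ≤ x) (hx1 : x ≤ 1)
    (hs : Summable fun n => a n * x ^ n) {d : ℕ} (hd : d ≠ 0) :
    ∑' k, a k * (x ^ d) ^ k ≤ x ^ (d - 1) * ∑' k, a k * x ^ k := by
  have hle : ∀ k, a k * (x ^ d) ^ k ≤ x ^ (d - 1) * (a k * x ^ k) := by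
    intro k
    rcases Nat.eq_zero_or_pos k with rfl | hk
    · simp [ha0]
    · have hdk : d - 1 + k ≤ d * k := by
        nlinarith [Nat.sub_add_cancel (Nat.one_le_iff_ne_zero.mpr hd)]
      have : x ^ (d * k) ≤ x ^ (d - 1 + k) := pow_le_pow_of_le_one hx0 hx1 hdk
      calc a k * (x ^ d) ^ k = a k * x ^ (d * k) := by rw [pow_mul]
        _ ≤ a k * x ^ (d - 1 + k) := mul_le_mul_of_nonneg_left this (ha k)
        _ = x ^ (d - 1) * (a k * x ^ k) := by rw [pow_add]; ring
  rw [← tsum_mul_left]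
  refine Summable.tsum_le_tsum hle (Summable.of_nonneg_of_le (fun k => ?_) hle (hs.mul_left _))
    (hs.mul_left _)
  exact mul_nonneg (ha k) (pow_nonneg (pow_nonneg hx0 d) k)

end SubstPow

lemma sum_Icc_pow_pred_le {x : ℝ} (hx0 : 0 ≤ x) (hx1 : x < 1) (m : ℕ) :
    ∑ k ∈ Icc 1 m, x ^ (k - 1) ≤ 1 / (1 - x) := by
  have := geom_sum_Ico_le_of_lt_one (m := 0) (n := m) hx0 hx1
  rw [← Ico_add_one_right_eq_Icc, sum_Ico_eq_sum_range]
  simpa [← range_eq_Ico] using this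

lemma sum_antidiagonalTuple_prod_le {j m : ℕ} {c : ℕ → ℝ} (hc : ∀ k, 0 ≤ c k) :
    ∑ t ∈ (Finset.Nat.antidiagonalTuple j m).filter (fun t => ∀ i, 1 ≤ t i), ∏ i, c (t i) ≤
      (∑ k ∈ Icc 1 m, c k) ^ j := by
  have hsub : (Finset.Nat.antidiagonalTuple j m).filter (fun t => ∀ i, 1 ≤ t i) ⊆
      Fintype.piFinset fun _ => Icc 1 m := by
    intro t ht
    rw [mem_filter, Finset.Nat.mem_antidiagonalTuple] at ht
    exact Fintype.mem_piFinset.mpr fun i =>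
      mem_Icc.mpr ⟨ht.2 i, ht.1 ▸ single_le_sum (fun _ _ => Nat.zero_le _) (mem_univ i)⟩
  calc _ ≤ ∑ t ∈ Fintype.piFinset (fun _ : Fin j => Icc 1 m), ∏ i, c (t i) :=
        sum_le_sum_of_subset_of_nonneg hsub fun t _ _ => prod_nonneg fun i _ => hc _
    _ = (∑ k ∈ Icc 1 m, c k) ^ j := by rw [← prod_univ_sum, prod_const, card_univ, Fintype.card_fin]

/-- The cycle index of the symmetric group `S_m`, evaluated at the power sums `p k`. -/
def cycleIndexSym (m : ℕ) (p : ℕ → ℝ) : ℝ :=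
  ∑ j ∈ Icc 1 m, (1 / (Nat.factorial j : ℝ)) *
    ∑ t ∈ (Finset.Nat.antidiagonalTuple j m).filter (fun t => ∀ i, 1 ≤ t i),
      (1 / ∏ i, (t i : ℝ)) * ∏ i, p (t i)

lemma cycleIndexSym_le_exp {m : ℕ} {p : ℕ → ℝ} (hp : ∀ k, 0 ≤ p k) :
    cycleIndexSym m p ≤ Real.exp (∑ k ∈ Icc 1 m, p k / k) := by
  set L := ∑ k ∈ Icc 1 m, p k / k
  have hc : ∀ k : ℕ, 0 ≤ p k / k := fun k => div_nonneg (hp k) k.cast_nonneg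
  have hterm : ∀ j, (1 / (Nat.factorial j : ℝ)) *
      ∑ t ∈ (Finset.Nat.antidiagonalTuple j m).filter (fun t => ∀ i, 1 ≤ t i),
        (1 / ∏ i, (t i : ℝ)) * ∏ i, p (t i) ≤ L ^ j / Nat.factorial j := by
    intro j
    simp only [one_div_mul_eq_div, ← prod_div_distrib]
    exact div_le_div_of_nonneg_right (sum_antidiagonalTuple_prod_le hc) (Nat.cast_nonneg _)
  calc cycleIndexSym m p ≤ ∑ j ∈ Icc 1 m, L ^ j / Nat.factorial j := sum_le_sum fun j _ => hterm j
    _ ≤ ∑ j ∈ range (m + 1), L ^ j / Nat.factorial j :=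
        sum_le_sum_of_subset_of_nonneg
          (fun j hj => mem_range.mpr (Nat.lt_succ_of_le (mem_Icc.mp hj).2))
          fun j _ _ => div_nonneg (pow_nonneg (sum_nonneg fun k _ => hc k) j) (by positivity)
    _ ≤ Real.exp L := Real.sum_le_exp_of_nonneg (sum_nonneg fun k _ => hc k) (m + 1)

structure IsNonnegConvergent (a : ℕ → ℝ) : Prop where
  apply_zero : a 0 = 0
  nonneg : ∀ n, 0 ≤ a n
  summable : ∀ ⦃x : ℝ⦄, 0 ≤ x → x < 1 → Summable fun n => a n * x ^ n

section PolyaOperators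

variable {a : ℕ → ℝ} {x : ℝ}

lemma Em_nonneg (ha : ∀ n, 0 ≤ a n) (m n : ℕ) : 0 ≤ Em m a n := by
  unfold Em
  split_ifs
  · dsimp only; split_ifs <;> norm_num
  · refine sum_nonneg fun j _ => mul_nonneg (by positivity) (sum_nonneg fun t _ => ?_)
    exact mul_nonneg (by positivity) (cauchyProd_nonneg (fun i => substPow_nonneg ha _) n)

lemma Em_eq_zero_of_lt (ha0 : a 0 = 0) {m n : ℕ} (hn : n < m) : Em m a n = 0 := by
  simp only [Em, if_neg (Nat.ne_zero_of_lt hn)]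
  refine sum_eq_zero fun j _ => mul_eq_zero_of_right _ (sum_eq_zero fun t ht => ?_)
  rw [mem_filter, Finset.Nat.mem_antidiagonalTuple] at ht
  exact mul_eq_zero_of_right _ <| cauchyProd_eq_zero_of_lt_sum (d := t)
    (fun i k hk => substPow_eq_zero_of_lt ha0 hk) (ht.1 ▸ hn)

lemma hasSum_Em_mul_pow (hs : ∀ d, d ≠ 0 → Summable fun n => a n * (x ^ d) ^ n) {m : ℕ}
    (hm : m ≠ 0) :
    HasSum (fun n => Em m a n * x ^ n) (cycleIndexSym m fun d => ∑' n, a n * (x ^ d) ^ n) := by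
  simp only [Em, if_neg hm, sum_mul, mul_assoc, cycleIndexSym]
  refine hasSum_sum fun j _ => (hasSum_sum fun t ht => ?_).mul_left _
  refine (hasSum_cauchyProd_mul_pow fun i => ?_).mul_left _
  have hti : t i ≠ 0 := Nat.one_le_iff_ne_zero.mp ((mem_filter.mp ht).2 i)
  exact hasSum_substPow_mul_pow hti (hs _ hti).hasSum

lemma Em_mul_pow_le (ha : IsNonnegConvergent a) (hx0 : 0 ≤ x) (hx1 : x < 1) {m : ℕ}
    (hm : m ≠ 0) (n : ℕ) :
    Em m a n * x ^ n ≤ Real.exp ((∑' k, a k * x ^ k) / (1 - x)) := by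
  set S := ∑' k, a k * x ^ k
  have hsd : ∀ d, d ≠ 0 → Summable fun n => a n * (x ^ d) ^ n := fun d hd =>
    ha.summable (pow_nonneg hx0 d) (pow_lt_one₀ hx0 hx1 hd)
  set p : ℕ → ℝ := fun d => ∑' n, a n * (x ^ d) ^ n
  have hp : ∀ d, 0 ≤ p d := fun d =>
    tsum_nonneg fun n => mul_nonneg (ha.nonneg n) (pow_nonneg (pow_nonneg hx0 d) n)
  have hpS : ∀ k ∈ Icc 1 m, p k / k ≤ x ^ (k - 1) * S := fun k hk =>
    (div_le_self (hp k) (by exact_mod_cast (mem_Icc.mp hk).1)).trans <|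
      tsum_mul_pow_pow_le ha.apply_zero ha.nonneg hx0 hx1.le (ha.summable hx0 hx1)
        (Nat.one_le_iff_ne_zero.mp (mem_Icc.mp hk).1)
  have hS : 0 ≤ S := tsum_nonneg fun n => mul_nonneg (ha.nonneg n) (pow_nonneg hx0 n)
  calc Em m a n * x ^ n ≤ cycleIndexSym m p :=
        le_hasSum (hasSum_Em_mul_pow hsd hm) n fun k _ =>
          mul_nonneg (Em_nonneg ha.nonneg m k) (pow_nonneg hx0 k)
    _ ≤ Real.exp (∑ k ∈ Icc 1 m, p k / k) := cycleIndexSym_le_exp hp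
    _ ≤ Real.exp (S / (1 - x)) := by
      gcongr
      calc ∑ k ∈ Icc 1 m, p k / k ≤ ∑ k ∈ Icc 1 m, x ^ (k - 1) * S := sum_le_sum hpS
        _ = S * ∑ k ∈ Icc 1 m, x ^ (k - 1) := by rw [mul_sum]; simp only [mul_comm]
        _ ≤ S * (1 / (1 - x)) := mul_le_mul_of_nonneg_left (sum_Icc_pow_pred_le hx0 hx1 m) hS
        _ = S / (1 - x) := mul_one_div S _

lemma Ege_eq_sum_Icc (ha0 : a 0 = 0) (m n : ℕ) : Ege m a n = ∑ j ∈ Icc m n, Em j a n := by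
  rw [Ege, tsum_eq_sum (s := Icc m n) fun j hj => ?_]
  · exact sum_congr rfl fun j hj => if_pos (mem_Icc.mp hj).1
  · rw [mem_Icc, not_and_or, not_le, not_le] at hj
    split_ifs with hmj
    · exact Em_eq_zero_of_lt ha0 (hj.resolve_left (not_lt.mpr hmj))
    · rfl

lemma Ege_nonneg (ha : ∀ n, 0 ≤ a n) (m n : ℕ) : 0 ≤ Ege m a n :=
  tsum_nonneg fun j => by split_ifs <;> [exact Em_nonneg ha j n; exact le_rfl]

end PolyaOperators

lemma summable_mul_pow_of_mul_pow_le {b : ℕ → ℝ} {x y C : ℝ} (hb : ∀ n, 0 ≤ b n) (hx : 0 ≤ x)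
    (hxy : x < y) (h : ∀ n, b n * y ^ n ≤ (n + 1) * C) : Summable fun n => b n * x ^ n := by
  have hy : 0 < y := hx.trans_lt hxy
  set q := x / y
  have hq0 : 0 ≤ q := div_nonneg hx hy.le
  have hq1 : q < 1 := (div_lt_one hy).mpr hxy
  refine Summable.of_nonneg_of_le (fun n => mul_nonneg (hb n) (pow_nonneg hx n)) (fun n => ?_)
    (((summable_pow_mul_geometric_of_norm_lt_one 1 (by rwa [Real.norm_of_nonneg hq0])).add
      (summable_geometric_of_lt_one hq0 hq1)).mul_left C)
  calc b n * x ^ n = b n * y ^ n * q ^ n := by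
        rw [div_pow, mul_assoc, mul_div_cancel₀ _ (pow_pos hy n).ne']
    _ ≤ (n + 1) * C * q ^ n := mul_le_mul_of_nonneg_right (h n) (pow_nonneg hq0 n)
    _ = C * ((n : ℝ) ^ 1 * q ^ n + q ^ n) := by ring

namespace IsNonnegConvergent

variable {a b : ℕ → ℝ}

lemma X : IsNonnegConvergent fun n => if n = 1 then (1 : ℝ) else 0 where
  apply_zero := by norm_num
  nonneg n := by split_ifs <;> norm_num
  summable _ _ _ := summable_of_ne_finset_zero (s := {1}) fun n hn => by simp_all

lemma geom {m : ℕ} : IsNonnegConvergent fun n => if 1 ≤ n ∧ m ∣ (n - 1) then (1 : ℝ) else 0 where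
  apply_zero := by norm_num
  nonneg n := by split_ifs <;> norm_num
  summable _ hx0 hx1 :=
    Summable.of_nonneg_of_le (fun n => by split_ifs <;> simp [pow_nonneg hx0 n])
      (fun n => by split_ifs <;> simp [pow_nonneg hx0 n]) (summable_geometric_of_lt_one hx0 hx1)

lemma add (ha : IsNonnegConvergent a) (hb : IsNonnegConvergent b) :
    IsNonnegConvergent fun n => a n + b n where
  apply_zero := by rw [ha.apply_zero, hb.apply_zero, add_zero]
  nonneg n := add_nonneg (ha.nonneg n) (hb.nonneg n)
  summable _ hx0 hx1 := by
    simpa only [add_mul] using (ha.summable hx0 hx1).add (hb.summable hx0 hx1)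

lemma mul (ha : IsNonnegConvergent a) (hb : IsNonnegConvergent b) :
    IsNonnegConvergent (cauchy a b) where
  apply_zero := by simp [cauchy, ha.apply_zero]
  nonneg := cauchy_nonneg ha.nonneg hb.nonneg
  summable _ hx0 hx1 :=
    (hasSum_cauchy_mul_pow (ha.summable hx0 hx1).hasSum (hb.summable hx0 hx1).hasSum).summable

lemma em (ha : IsNonnegConvergent a) {m : ℕ} (hm : m ≠ 0) : IsNonnegConvergent (Em m a) where
  apply_zero := Em_eq_zero_of_lt ha.apply_zero (Nat.pos_of_ne_zero hm)
  nonneg := Em_nonneg ha.nonneg m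
  summable _ hx0 hx1 := (hasSum_Em_mul_pow (fun d hd =>
    ha.summable (pow_nonneg hx0 d) (pow_lt_one₀ hx0 hx1 hd)) hm).summable

lemma ege (ha : IsNonnegConvergent a) {m : ℕ} (hm : m ≠ 0) : IsNonnegConvergent (Ege m a) where
  apply_zero := by
    rw [Ege_eq_sum_Icc ha.apply_zero, Icc_eq_empty_of_lt (Nat.pos_of_ne_zero hm), sum_empty]
  nonneg := Ege_nonneg ha.nonneg m
  summable x hx0 hx1 := by
    obtain ⟨y, hxy, hy1⟩ := exists_between hx1
    have hy0 : 0 ≤ y := hx0.trans hxy.le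
    refine summable_mul_pow_of_mul_pow_le (Ege_nonneg ha.nonneg m) hx0 hxy
      (C := Real.exp ((∑' k, a k * y ^ k) / (1 - y))) fun n => ?_
    rw [Ege_eq_sum_Icc ha.apply_zero, sum_mul]
    calc ∑ j ∈ Icc m n, Em j a n * y ^ n
        ≤ #(Icc m n) • Real.exp ((∑' k, a k * y ^ k) / (1 - y)) :=
          sum_le_card_nsmul _ _ _ fun j hj =>
            Em_mul_pow_le ha hy0 hy1 (by have := (mem_Icc.mp hj).1; omega) n
      _ ≤ (n + 1) * Real.exp ((∑' k, a k * y ^ k) / (1 - y)) := by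
          rw [nsmul_eq_mul, Nat.card_Icc]
          gcongr
          exact_mod_cast Nat.sub_le _ _

end IsNonnegConvergent

lemma InG.isNonnegConvergent {a : ℕ → ℝ} (ha : InG a) : IsNonnegConvergent a := by
  induction ha with
  | X => exact .X
  | geom => exact .geom
  | add _ _ _ _ iha ihb => exact iha.add ihb
  | mul _ _ _ _ iha ihb => exact iha.mul ihb
  | em _ _ hm _ iha => exact iha.em (Nat.one_le_iff_ne_zero.mp hm)
  | ege _ _ hm _ iha => exact iha.ege (Nat.one_le_iff_ne_zero.mp hm)

/-- Every member of `𝔊` has radius of convergence at least 1. -/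
theorem G_radius_ge_one (a : ℕ → ℝ) (ha : InG a) (x : ℝ) (hx : |x| < 1) :
    Summable (fun n => |a n| * |x| ^ n) := by
  have h := ha.isNonnegConvergent
  simpa only [abs_of_nonneg (h.nonneg _)] using h.summable (abs_nonneg x) hx
end
end
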